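/- arXiv:math/0102019 — 3 statements merged into one kernel-verified Lean document; each statement's English description precedes it below -/
import Mathlib

section
/- Let Ω ⊆ ℝⁿ be open and (u_ε) ∈ E_M(Ω). If for every compact K ⊆ Ω and every m ∈ ℕ one has sup_{x∈K} |u_ε(x)| = O(ε^m) as ε→0, then (u_ε) ∈ N(Ω). That is, a moderate net is negligible as soon as the negligibility estimates hold for the functions themselves, without taking into account any derivatives. -/
open Set Metric

lemma fderiv_bound_of_bounds {E F : Type*} [NormedAddCommGroup E] [NormedSpace ℝ E]
    [NormedAddCommGroup F] [NormedSpace ℝ F]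
    (g : E → F) (x : E) (h M₀ L : ℝ) (hh : 0 < h) (hM₀ : 0 ≤ M₀) (hL : 0 ≤ L)
    (hdiff : ∀ z ∈ closedBall x h, DifferentiableAt ℝ g z)
    (hg : ∀ z ∈ closedBall x h, ‖g z‖ ≤ M₀)
    (hlip : ∀ z ∈ closedBall x h, ‖fderiv ℝ g z - fderiv ℝ g x‖ ≤ L) :
    ‖fderiv ℝ g x‖ ≤ 2 * M₀ / h + L := by
  have hxmem : x ∈ closedBall x h := mem_closedBall_self hh.le
  apply ContinuousLinearMap.opNorm_le_bound _ (by positivity)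
  intro v
  rcases eq_or_ne v 0 with rfl | hv
  · simp
  have hv' : 0 < ‖v‖ := norm_pos_iff.mpr hv
  set w : E := (h / ‖v‖) • v with hw
  have hwnorm : ‖w‖ = h := by
    rw [hw, norm_smul, Real.norm_eq_abs, abs_of_pos (by positivity)]
    field_simp
  have hymem : x + w ∈ closedBall x h := by
    simp [mem_closedBall, dist_eq_norm, hwnorm]
  have key : ‖g (x + w) - g x - (fderiv ℝ g x) ((x + w) - x)‖ ≤ L * ‖(x + w) - x‖ :=
    (convex_closedBall x h).norm_image_sub_le_of_norm_fderiv_le' hdiff hlip hxmem hymem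
  have hws : (x + w) - x = w := by abel
  rw [hws, hwnorm] at key
  have hAw : ‖(fderiv ℝ g x) w‖ ≤ 2 * M₀ + L * h := by
    have h1 := hg _ hymem
    have h2 := hg _ hxmem
    have := norm_sub_norm_le ((fderiv ℝ g x) w) (g (x + w) - g x)
    have h3 : ‖(fderiv ℝ g x) w - (g (x + w) - g x)‖ ≤ L * h := by
      rw [← norm_neg]; simpa [neg_sub] using key
    have h4 : ‖g (x + w) - g x‖ ≤ 2 * M₀ := by
      calc ‖g (x + w) - g x‖ ≤ ‖g (x + w)‖ + ‖g x‖ := norm_sub_le _ _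
        _ ≤ 2 * M₀ := by linarith
    linarith [this]
  have hvw : v = (‖v‖ / h) • w := by
    rw [hw, smul_smul]
    field_simp
    rw [one_smul]
  calc ‖(fderiv ℝ g x) v‖ = ‖(fderiv ℝ g x) ((‖v‖ / h) • w)‖ := by rw [← hvw]
    _ = (‖v‖ / h) * ‖(fderiv ℝ g x) w‖ := by
        rw [map_smul, norm_smul, Real.norm_eq_abs, abs_of_pos (by positivity)]
    _ ≤ (‖v‖ / h) * (2 * M₀ + L * h) := by
        apply mul_le_mul_of_nonneg_left hAw (by positivity)
    _ = (2 * M₀ / h + L) * ‖v‖ := by field_simp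

/-- A moderate net on an open set `Ω ⊆ ℝⁿ` whose 0-th order
estimates are negligible is negligible (no derivatives needed). -/
theorem colombeau_negligibility_zeroth_order
    {n : ℕ} {Ω : Set (EuclideanSpace ℝ (Fin n))} (hΩ : IsOpen Ω)
    (u : ℝ → EuclideanSpace ℝ (Fin n) → ℝ)
    -- `(u_ε)` is a net of smooth functions on `Ω`
    (hsmooth : ∀ ε ∈ Ioc (0:ℝ) 1, ContDiffOn ℝ (⊤ : ℕ∞) (u ε) Ω)
    -- `(u_ε) ∈ E_M(Ω)`: moderateness of all derivatives on compact sets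
    (hmod : ∀ K ⊆ Ω, IsCompact K → ∀ k : ℕ, ∃ N : ℕ, ∃ C > (0:ℝ), ∃ η > (0:ℝ),
      ∀ ε ∈ Ioo (0:ℝ) η, ∀ x ∈ K,
        ‖iteratedFDerivWithin ℝ k (u ε) Ω x‖ ≤ C * ε ^ (-(N:ℤ)))
    -- zeroth order negligibility estimates
    (h0 : ∀ K ⊆ Ω, IsCompact K → ∀ m : ℕ, ∃ C > (0:ℝ), ∃ η > (0:ℝ),
      ∀ ε ∈ Ioo (0:ℝ) η, ∀ x ∈ K, |u ε x| ≤ C * ε ^ m) :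
    -- conclusion: `(u_ε) ∈ N(Ω)`, i.e. negligibility of all derivatives
    ∀ K ⊆ Ω, IsCompact K → ∀ k : ℕ, ∀ m : ℕ, ∃ C > (0:ℝ), ∃ η > (0:ℝ),
      ∀ ε ∈ Ioo (0:ℝ) η, ∀ x ∈ K,
        ‖iteratedFDerivWithin ℝ k (u ε) Ω x‖ ≤ C * ε ^ m := by
  -- For ε ∈ (0,1], iterated (global) derivatives of u ε are differentiable on Ω
  -- and agree with the within-versions on Ω.
  have hEq : ∀ ε, ∀ j : ℕ, ∀ z ∈ Ω,
      iteratedFDerivWithin ℝ j (u ε) Ω z = iteratedFDeriv ℝ j (u ε) z :=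
    fun ε j z hz => iteratedFDerivWithin_of_isOpen j hΩ hz
  have hdiffAt : ∀ ε ∈ Ioc (0:ℝ) 1, ∀ j : ℕ, ∀ z ∈ Ω,
      DifferentiableAt ℝ (iteratedFDeriv ℝ j (u ε)) z := by
    intro ε hε j z hz
    have hd : DifferentiableWithinAt ℝ (iteratedFDerivWithin ℝ j (u ε) Ω) Ω z :=
      (hsmooth ε hε).differentiableOn_iteratedFDerivWithin
        (by exact_mod_cast lt_top_iff_ne_top.mpr (by simp)) hΩ.uniqueDiffOn z hz
    have hd' : DifferentiableAt ℝ (iteratedFDerivWithin ℝ j (u ε) Ω) z :=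
      hd.differentiableAt (hΩ.mem_nhds hz)
    have heq : iteratedFDerivWithin ℝ j (u ε) Ω =ᶠ[nhds z] iteratedFDeriv ℝ j (u ε) :=
      Filter.eventuallyEq_of_mem (hΩ.mem_nhds hz) (iteratedFDerivWithin_of_isOpen j hΩ)
    exact hd'.congr_of_eventuallyEq heq.symm
  -- Main induction on the order of the derivative.
  have main : ∀ k : ℕ, ∀ K ⊆ Ω, IsCompact K → ∀ m : ℕ, ∃ C > (0:ℝ), ∃ η > (0:ℝ),
      ∀ ε ∈ Ioo (0:ℝ) η, ∀ x ∈ K,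
        ‖iteratedFDerivWithin ℝ k (u ε) Ω x‖ ≤ C * ε ^ m := by
    intro k
    induction k with
    | zero =>
      intro K hK hKc m
      obtain ⟨C, hC, η, hη, hb⟩ := h0 K hK hKc m
      exact ⟨C, hC, η, hη, fun ε hε x hx => by
        rw [norm_iteratedFDerivWithin_zero, Real.norm_eq_abs]; exact hb ε hε x hx⟩
    | succ k IH =>
      intro K hK hKc m
      -- a compact thickening of K inside Ω
      obtain ⟨δ, hδ, hKδ⟩ := hKc.exists_cthickening_subset_open hΩ hK
      set K' : Set (EuclideanSpace ℝ (Fin n)) := cthickening δ K with hK'def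
      have hK'c : IsCompact K' := hKc.cthickening
      -- moderateness of order k+2 on K'
      obtain ⟨N, C₂, hC₂, η₂, hη₂, hb₂⟩ := hmod K' hKδ hK'c (k + 2)
      -- negligibility of order k on K' at order 2m+N (induction hypothesis)
      obtain ⟨C₀, hC₀, η₀, hη₀, hb₀⟩ := IH K' hKδ hK'c (N + m + m)
      refine ⟨2 * C₀ / δ + C₂ * δ, by positivity, min η₀ (min η₂ 1), by positivity, ?_⟩
      rintro ε ⟨hε0, hεη⟩ x hx
      have hε1 : ε < 1 := lt_of_lt_of_le hεη (le_trans (min_le_right _ _) (min_le_right _ _))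
      have hεIoc : ε ∈ Ioc (0:ℝ) 1 := ⟨hε0, hε1.le⟩
      have hεη₀ : ε ∈ Ioo (0:ℝ) η₀ := ⟨hε0, lt_of_lt_of_le hεη (min_le_left _ _)⟩
      have hεη₂ : ε ∈ Ioo (0:ℝ) η₂ :=
        ⟨hε0, lt_of_lt_of_le hεη (le_trans (min_le_right _ _) (min_le_left _ _))⟩
      set q : ℕ := N + m with hq
      set h : ℝ := δ * ε ^ q with hh
      have hhpos : 0 < h := by positivity
      have hhδ : h ≤ δ := by
        have : ε ^ q ≤ 1 := pow_le_one₀ hε0.le hε1.le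
        calc h = δ * ε ^ q := rfl
          _ ≤ δ * 1 := by nlinarith
          _ = δ := mul_one δ
      -- the closed ball of radius h around x is inside K'
      have hball : closedBall x h ⊆ K' := by
        intro z hz
        exact mem_cthickening_of_dist_le z x δ K hx (le_trans (mem_closedBall.mp hz) hhδ)
      have hballΩ : closedBall x h ⊆ Ω := hball.trans hKδ
      set g : EuclideanSpace ℝ (Fin n) → (EuclideanSpace ℝ (Fin n) [×k]→L[ℝ] ℝ) :=
        iteratedFDeriv ℝ k (u ε) with hg
      -- bound on g on the ball
      have hM₀ : ∀ z ∈ closedBall x h, ‖g z‖ ≤ C₀ * ε ^ (N + m + m) := by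
        intro z hz
        rw [hg, ← hEq ε k z (hballΩ hz)]
        exact hb₀ ε hεη₀ z (hball hz)
      -- Lipschitz bound on fderiv g on the ball
      have hlip : ∀ z ∈ closedBall x h,
          ‖fderiv ℝ g z - fderiv ℝ g x‖ ≤ (C₂ * ε ^ (-(N:ℤ))) * h := by
        intro z hz
        have hxball : x ∈ closedBall x h := mem_closedBall_self hhpos.le
        -- identify ‖fderiv g z - fderiv g x‖ with the difference of (k+1)-th derivatives
        have hnorm_eq : ∀ z₁ z₂ : EuclideanSpace ℝ (Fin n),
            ‖fderiv ℝ g z₁ - fderiv ℝ g z₂‖ =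
            ‖iteratedFDeriv ℝ (k+1) (u ε) z₁ - iteratedFDeriv ℝ (k+1) (u ε) z₂‖ := by
          intro z₁ z₂
          have e1 : iteratedFDeriv ℝ (k+1) (u ε) z₁ =
              (continuousMultilinearCurryLeftEquiv ℝ
                (fun _ : Fin (k + 1) => EuclideanSpace ℝ (Fin n)) ℝ).symm
                (fderiv ℝ g z₁) := by
            rw [iteratedFDeriv_succ_eq_comp_left]; rfl
          have e2 : iteratedFDeriv ℝ (k+1) (u ε) z₂ =
              (continuousMultilinearCurryLeftEquiv ℝ
                (fun _ : Fin (k + 1) => EuclideanSpace ℝ (Fin n)) ℝ).symm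
                (fderiv ℝ g z₂) := by
            rw [iteratedFDeriv_succ_eq_comp_left]; rfl
          rw [e1, e2, ← dist_eq_norm]; refine (dist_eq_norm (fderiv ℝ g z₁) (fderiv ℝ g z₂)).symm.trans ?_
          exact ((continuousMultilinearCurryLeftEquiv ℝ
            (fun _ : Fin (k + 1) => EuclideanSpace ℝ (Fin n)) ℝ).symm.isometry.dist_eq _ _).symm
        rw [hnorm_eq]
        -- mean value inequality for the (k+1)-th derivative on the convex ball
        have hmv : ‖iteratedFDeriv ℝ (k+1) (u ε) z - iteratedFDeriv ℝ (k+1) (u ε) x‖ ≤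
            (C₂ * ε ^ (-(N:ℤ))) * ‖z - x‖ := by
          apply (convex_closedBall x h).norm_image_sub_le_of_norm_fderiv_le
            (fun w hw => hdiffAt ε hεIoc (k+1) w (hballΩ hw)) ?_ hxball hz
          intro w hw
          rw [norm_fderiv_iteratedFDeriv, ← hEq ε (k+2) w (hballΩ hw)]
          exact hb₂ ε hεη₂ w (hball hw)
        calc ‖iteratedFDeriv ℝ (k+1) (u ε) z - iteratedFDeriv ℝ (k+1) (u ε) x‖
            ≤ (C₂ * ε ^ (-(N:ℤ))) * ‖z - x‖ := hmv
          _ ≤ (C₂ * ε ^ (-(N:ℤ))) * h := by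
              apply mul_le_mul_of_nonneg_left ?_ (by positivity)
              simpa [dist_eq_norm] using mem_closedBall.mp hz
      -- apply the interpolation lemma
      have hkey : ‖fderiv ℝ g x‖ ≤
          2 * (C₀ * ε ^ (N + m + m)) / h + (C₂ * ε ^ (-(N:ℤ))) * h :=
        fderiv_bound_of_bounds g x h _ _ hhpos (by positivity) (by positivity)
          (fun z hz => hdiffAt ε hεIoc k z (hballΩ hz)) hM₀ hlip
      -- convert back
      have hx' : x ∈ Ω := hK hx
      have hfin : ‖iteratedFDerivWithin ℝ (k+1) (u ε) Ω x‖ = ‖fderiv ℝ g x‖ := by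
        rw [hEq ε (k+1) x hx', ← norm_fderiv_iteratedFDeriv]
      rw [hfin]
      refine le_trans hkey (le_of_eq ?_)
      -- arithmetic: 2C₀ ε^{N+2m}/(δ ε^{N+m}) + C₂ ε^{-N} δ ε^{N+m} = (2C₀/δ + C₂δ) ε^m
      have hεN : ε ^ (-(N:ℤ)) = (ε ^ N)⁻¹ := by
        rw [zpow_neg, zpow_natCast]
      rw [hh, hεN, hq]
      have h1 : ε ^ (N + m + m) = ε ^ N * ε ^ m * ε ^ m := by rw [← pow_add, ← pow_add]
      have h2 : ε ^ (N + m) = ε ^ N * ε ^ m := by rw [← pow_add]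
      have hεNne : (ε : ℝ) ^ N ≠ 0 := by positivity
      have hεmne : (ε : ℝ) ^ m ≠ 0 := by positivity
      rw [h1, h2]
      field_simp
  intro K hK hKc k m
  exact main k K hK hKc m
end

section
/- Let X be a set and let d₁, d₂ be two metrics on X inducing the same topology τ. Assume that every point p ∈ X has a τ-neighborhood V and constants α > 0, r₀ > 0 such that d₂(q,q′) ≤ α·d₁(q,q′) whenever q, q′ ∈ V and d₁(q,q′) < r₀. Then for all τ-compact sets K, K′ ⊆ X there exists C > 0 such that d₂(p,q) ≤ C·d₁(p,q) for all p ∈ K and q ∈ K′. -/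
open Set

/-- **Statement 4.** If two metrics `d₁, d₂` on a set `X` induce the same topology and
are locally comparable (around every point, `d₂ ≤ α·d₁` for nearby pairs of points),
then on any pair of compact sets `K, K'` there is a global constant `C` with
`d₂(p,q) ≤ C·d₁(p,q)` for `p ∈ K`, `q ∈ K'`. -/
theorem metrics_locally_comparable_implies_compactly_comparable
    {X : Type*} [τ : TopologicalSpace X]
    (d₁ d₂ : X → X → ℝ)
    -- `d₁` is a metric
    (h₁self : ∀ p, d₁ p p = 0) (h₁pos : ∀ p q, p ≠ q → 0 < d₁ p q)
    (h₁symm : ∀ p q, d₁ p q = d₁ q p)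
    (h₁tri : ∀ p q r, d₁ p r ≤ d₁ p q + d₁ q r)
    -- `d₂` is a metric
    (h₂self : ∀ p, d₂ p p = 0) (h₂pos : ∀ p q, p ≠ q → 0 < d₂ p q)
    (h₂symm : ∀ p q, d₂ p q = d₂ q p)
    (h₂tri : ∀ p q r, d₂ p r ≤ d₂ p q + d₂ q r)
    -- both metrics induce the topology `τ`
    (h₁top : ∀ s : Set X, IsOpen s ↔ ∀ p ∈ s, ∃ r > (0:ℝ), {q | d₁ p q < r} ⊆ s)
    (h₂top : ∀ s : Set X, IsOpen s ↔ ∀ p ∈ s, ∃ r > (0:ℝ), {q | d₂ p q < r} ⊆ s)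
    -- local comparability
    (hloc : ∀ p : X, ∃ V ∈ nhds p, ∃ α > (0:ℝ), ∃ r₀ > (0:ℝ),
      ∀ q ∈ V, ∀ q' ∈ V, d₁ q q' < r₀ → d₂ q q' ≤ α * d₁ q q')
    (K K' : Set X) (hK : IsCompact K) (hK' : IsCompact K') :
    ∃ C > (0:ℝ), ∀ p ∈ K, ∀ q ∈ K', d₂ p q ≤ C * d₁ p q := by
  -- nonnegativity
  have h₁nonneg : ∀ p q, 0 ≤ d₁ p q := by
    intro p q
    have t := h₁tri p q p
    have s := h₁symm p q
    have z := h₁self p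
    linarith
  have h₂nonneg : ∀ p q, 0 ≤ d₂ p q := by
    intro p q
    have t := h₂tri p q p
    have s := h₂symm p q
    have z := h₂self p
    linarith
  -- balls are open
  have hball₂ : ∀ p : X, ∀ r : ℝ, IsOpen {q | d₂ p q < r} := by
    intro p r
    rw [h₂top]
    intro x hx
    simp only [mem_setOf_eq] at hx
    refine ⟨r - d₂ p x, by linarith, ?_⟩
    intro y hy
    simp only [mem_setOf_eq] at hy ⊢
    have := h₂tri p x y
    linarith
  have hball₁ : ∀ p : X, ∀ r : ℝ, IsOpen {q | d₁ p q < r} := by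
    intro p r
    rw [h₁top]
    intro x hx
    simp only [mem_setOf_eq] at hx
    refine ⟨r - d₁ p x, by linarith, ?_⟩
    intro y hy
    simp only [mem_setOf_eq] at hy ⊢
    have := h₁tri p x y
    linarith
  -- d₂ is continuous on X × X
  have hcont : Continuous (fun z : X × X => d₂ z.1 z.2) := by
    rw [continuous_iff_continuousAt]
    rintro ⟨p, q⟩
    rw [ContinuousAt, Metric.tendsto_nhds]
    intro ε hε
    have hU : ({x | d₂ p x < ε/2} ×ˢ {y | d₂ q y < ε/2}) ∈ nhds (p, q) := by
      apply prod_mem_nhds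
      · exact (hball₂ p (ε/2)).mem_nhds (by simp [h₂self]; linarith)
      · exact (hball₂ q (ε/2)).mem_nhds (by simp [h₂self]; linarith)
    filter_upwards [hU] with z hz
    obtain ⟨hz1, hz2⟩ := hz
    simp only [mem_setOf_eq] at hz1 hz2
    rw [Real.dist_eq, abs_lt]
    have t1 := h₂tri p z.1 q
    have t2 := h₂tri z.1 z.2 q
    have t3 := h₂tri z.1 p z.2
    have t4 := h₂tri p q z.2
    have s1 := h₂symm z.2 q
    have s2 := h₂symm z.1 p
    have s3 := h₂symm q z.2
    constructor <;> linarith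
  -- local comparability in terms of d₁-balls
  have key : ∀ p : X, ∃ ρ > (0:ℝ), ∃ α > (0:ℝ),
      ∀ q q', d₁ p q < ρ → d₁ p q' < ρ → d₂ q q' ≤ α * d₁ q q' := by
    intro p
    obtain ⟨V, hV, α, hα, r₀, hr₀, hcomp⟩ := hloc p
    obtain ⟨U, hUV, hUopen, hpU⟩ := mem_nhds_iff.1 hV
    obtain ⟨ε, hε, hballU⟩ := (h₁top U).1 hUopen p hpU
    refine ⟨min ε (r₀/2), by positivity, α, hα, ?_⟩
    intro q q' hq hq'
    have hqV : q ∈ V := hUV (hballU (lt_of_lt_of_le hq (min_le_left _ _)))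
    have hq'V : q' ∈ V := hUV (hballU (lt_of_lt_of_le hq' (min_le_left _ _)))
    have hlt : d₁ q q' < r₀ := by
      have t := h₁tri q p q'
      have s := h₁symm q p
      have m1 : d₁ p q < r₀/2 := lt_of_lt_of_le hq (min_le_right _ _)
      have m2 : d₁ p q' < r₀/2 := lt_of_lt_of_le hq' (min_le_right _ _)
      linarith
    exact hcomp q hqV q' hq'V hlt
  choose ρ hρ α hα hcomp using key
  -- trivial cases
  rcases K.eq_empty_or_nonempty with hKe | hKne
  · exact ⟨1, one_pos, by simp [hKe]⟩
  rcases K'.eq_empty_or_nonempty with hK'e | hK'ne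
  · exact ⟨1, one_pos, by simp [hK'e]⟩
  -- cover K by small balls
  obtain ⟨t, htK, hcover⟩ := hK.elim_nhds_subcover (fun x => {q | d₁ x q < ρ x / 2})
    (fun x _ => (hball₁ x (ρ x / 2)).mem_nhds (by simp [h₁self]; linarith [hρ x]))
  have htne : t.Nonempty := by
    obtain ⟨p, hp⟩ := hKne
    rcases Set.mem_iUnion₂.1 (hcover hp) with ⟨x, hx, _⟩
    exact ⟨x, hx⟩
  set δ : ℝ := t.inf' htne (fun x => ρ x / 2) with hδdef
  have hδpos : 0 < δ := by
    rw [hδdef]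
    rw [Finset.lt_inf'_iff]
    intro x _
    linarith [hρ x]
  set A : ℝ := t.sup' htne α with hAdef
  have hApos : 0 < A := by
    obtain ⟨x, hx⟩ := htne
    exact lt_of_lt_of_le (hα x) (Finset.le_sup' α hx)
  -- global bound for d₂ on K × K'
  obtain ⟨z, hz, hzmax⟩ := (hK.prod hK').exists_isMaxOn (hKne.prod hK'ne)
    hcont.continuousOn
  set M : ℝ := d₂ z.1 z.2 with hMdef
  have hM0 : 0 ≤ M := h₂nonneg _ _
  refine ⟨max A (M/δ) + 1, by positivity, ?_⟩
  intro p hp q hq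
  have hC1 : A ≤ max A (M/δ) + 1 := le_trans (le_max_left _ _) (le_add_of_nonneg_right zero_le_one)
  have hC2 : M/δ ≤ max A (M/δ) + 1 := le_trans (le_max_right _ _) (le_add_of_nonneg_right zero_le_one)
  have hd1 : 0 ≤ d₁ p q := h₁nonneg p q
  by_cases hcase : d₁ p q < δ
  · rcases Set.mem_iUnion₂.1 (hcover hp) with ⟨x, hx, hpx⟩
    simp only [mem_setOf_eq] at hpx
    have hδx : δ ≤ ρ x / 2 := Finset.inf'_le _ hx
    have hqx : d₁ x q < ρ x := by
      have := h₁tri x p q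
      linarith
    have hpx' : d₁ x p < ρ x := by linarith [hρ x]
    have := hcomp x p q hpx' hqx
    have hαA : α x ≤ A := Finset.le_sup' α hx
    calc d₂ p q ≤ α x * d₁ p q := this
      _ ≤ A * d₁ p q := mul_le_mul_of_nonneg_right hαA hd1
      _ ≤ (max A (M/δ) + 1) * d₁ p q := mul_le_mul_of_nonneg_right hC1 hd1
  · push_neg at hcase
    have hMpq : d₂ p q ≤ M := isMaxOn_iff.1 hzmax (p, q) ⟨hp, hq⟩
    calc d₂ p q ≤ M := hMpq
      _ = (M/δ) * δ := (div_mul_cancel₀ M (ne_of_gt hδpos)).symm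
      _ ≤ (M/δ) * d₁ p q := by
          apply mul_le_mul_of_nonneg_left hcase (by positivity)
      _ ≤ (max A (M/δ) + 1) * d₁ p q := mul_le_mul_of_nonneg_right hC2 hd1
end

section
/- Let Ω ⊆ ℝⁿ be open and (u_ε) ∈ E_M(Ω). Let (x_ε)_{ε∈(0,1]} and (y_ε)_{ε∈(0,1]} be nets in Ω for which there exist a compact set K ⊆ Ω and η > 0 with x_ε, y_ε ∈ K for all ε < η. If |x_ε − y_ε| = O(ε^m) as ε→0 for every m ∈ ℕ, then |u_ε(x_ε) − u_ε(y_ε)| = O(ε^m) as ε→0 for every m ∈ ℕ. Hence the point value cl[(u_ε(x_ε))_ε] of U = cl[(u_ε)] ∈ G(Ω) at a compactly supported generalized point is well defined, independent of the representing net of points. -/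
open Set

/-- **Statement 6.** Point values of a moderate net at equivalent compactly supported
nets of points differ by a negligible net of numbers; hence the point value of a
Colombeau generalized function at a compactly supported generalized point is well
defined. -/
theorem colombeau_point_value_well_defined
    {n : ℕ} {Ω : Set (EuclideanSpace ℝ (Fin n))} (hΩ : IsOpen Ω)
    (u : ℝ → EuclideanSpace ℝ (Fin n) → ℝ)
    -- `(u_ε)` is a net of smooth functions on `Ω`
    (hsmooth : ∀ ε ∈ Ioc (0:ℝ) 1, ContDiffOn ℝ (⊤ : ℕ∞) (u ε) Ω)
    -- `(u_ε) ∈ E_M(Ω)`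
    (hmod : ∀ K ⊆ Ω, IsCompact K → ∀ k : ℕ, ∃ N : ℕ, ∃ C > (0:ℝ), ∃ η > (0:ℝ),
      ∀ ε ∈ Ioo (0:ℝ) η, ∀ x ∈ K,
        ‖iteratedFDerivWithin ℝ k (u ε) Ω x‖ ≤ C * ε ^ (-(N:ℤ)))
    -- two nets of points in Ω ...
    (x y : ℝ → EuclideanSpace ℝ (Fin n))
    (hxΩ : ∀ ε ∈ Ioc (0:ℝ) 1, x ε ∈ Ω)
    (hyΩ : ∀ ε ∈ Ioc (0:ℝ) 1, y ε ∈ Ω)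
    -- ... eventually contained in a common compact subset `K ⊆ Ω`
    (K : Set (EuclideanSpace ℝ (Fin n))) (hK : IsCompact K) (hKΩ : K ⊆ Ω)
    (η₀ : ℝ) (hη₀ : 0 < η₀)
    (hxK : ∀ ε ∈ Ioo (0:ℝ) η₀, x ε ∈ K)
    (hyK : ∀ ε ∈ Ioo (0:ℝ) η₀, y ε ∈ K)
    -- the nets of points are equivalent: |x_ε − y_ε| = O(ε^m) for every m
    (hclose : ∀ m : ℕ, ∃ C > (0:ℝ), ∃ η > (0:ℝ),
      ∀ ε ∈ Ioo (0:ℝ) η, ‖x ε - y ε‖ ≤ C * ε ^ m) :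
    -- conclusion: |u_ε(x_ε) − u_ε(y_ε)| = O(ε^m) for every m
    ∀ m : ℕ, ∃ C > (0:ℝ), ∃ η > (0:ℝ),
      ∀ ε ∈ Ioo (0:ℝ) η, |u ε (x ε) - u ε (y ε)| ≤ C * ε ^ m := by
  -- thicken K inside Ω
  obtain ⟨δ, hδ, hδΩ⟩ := hK.exists_cthickening_subset_open hΩ hKΩ
  intro m
  obtain ⟨N, C₁, hC₁, η₁, hη₁, hbd⟩ :=
    hmod (Metric.cthickening δ K) hδΩ (hK.cthickening) 1
  obtain ⟨C₂, hC₂, η₂, hη₂, hcl⟩ := hclose (m + N + 1)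
  refine ⟨C₁ * C₂, mul_pos hC₁ hC₂,
    min (min η₀ η₁) (min η₂ (min 1 (δ / C₂))),
    lt_min (lt_min hη₀ hη₁) (lt_min hη₂ (lt_min one_pos (div_pos hδ hC₂))), ?_⟩
  rintro ε ⟨hε0, hεlt⟩
  have hε1 : ε < 1 := hεlt.trans_le ((min_le_right _ _).trans ((min_le_right _ _).trans (min_le_left _ _)))
  have hεη₀ : ε ∈ Ioo (0:ℝ) η₀ := ⟨hε0, hεlt.trans_le ((min_le_left _ _).trans (min_le_left _ _))⟩
  have hεη₁ : ε ∈ Ioo (0:ℝ) η₁ := ⟨hε0, hεlt.trans_le ((min_le_left _ _).trans (min_le_right _ _))⟩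
  have hεη₂ : ε ∈ Ioo (0:ℝ) η₂ := ⟨hε0, hεlt.trans_le ((min_le_right _ _).trans (min_le_left _ _))⟩
  have hεδC : ε < δ / C₂ := hεlt.trans_le ((min_le_right _ _).trans ((min_le_right _ _).trans (min_le_right _ _)))
  have hxy : ‖x ε - y ε‖ ≤ C₂ * ε ^ (m + N + 1) := hcl ε hεη₂
  have hεpow_le : ε ^ (m + N + 1) ≤ ε := by
    calc ε ^ (m + N + 1) ≤ ε ^ 1 :=
      pow_le_pow_of_le_one hε0.le hε1.le (by omega)
    _ = ε := pow_one ε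
  have hxylt : ‖x ε - y ε‖ < δ := by
    calc ‖x ε - y ε‖ ≤ C₂ * ε ^ (m + N + 1) := hxy
    _ ≤ C₂ * ε := by nlinarith
    _ < δ := by
      rw [lt_div_iff₀ hC₂] at hεδC; linarith [hεδC]
  -- the ball around x ε of radius δ lies in Ω
  have hball : Metric.ball (x ε) δ ⊆ Ω := by
    refine subset_trans ?_ hδΩ
    exact (Metric.ball_subset_thickening (hxK ε hεη₀) δ).trans
      (Metric.thickening_subset_cthickening δ K)
  have hεIoc : ε ∈ Ioc (0:ℝ) 1 := ⟨hε0, hε1.le⟩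
  have hdiff : DifferentiableOn ℝ (u ε) Ω :=
    (hsmooth ε hεIoc).differentiableOn (by simp)
  -- bound on the derivative on the ball
  have hub : UniqueDiffOn ℝ Ω := hΩ.uniqueDiffOn
  have hder : ∀ z ∈ Metric.ball (x ε) δ,
      HasFDerivWithinAt (u ε) (fderivWithin ℝ (u ε) Ω z) (Metric.ball (x ε) δ) z := by
    intro z hz
    exact ((hdiff z (hball hz)).hasFDerivWithinAt).mono hball
  have hbound : ∀ z ∈ Metric.ball (x ε) δ,
      ‖fderivWithin ℝ (u ε) Ω z‖ ≤ C₁ * ε ^ (-(N:ℤ)) := by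
    intro z hz
    have hzK : z ∈ Metric.cthickening δ K :=
      Metric.thickening_subset_cthickening δ K (Metric.ball_subset_thickening (hxK ε hεη₀) δ hz)
    have h1 := hbd ε hεη₁ z hzK
    refine le_trans ?_ h1
    refine ContinuousLinearMap.opNorm_le_bound _ (norm_nonneg _) (fun v => ?_)
    have : fderivWithin ℝ (u ε) Ω z v
        = iteratedFDerivWithin ℝ 1 (u ε) Ω z (fun _ => v) := by
      rw [iteratedFDerivWithin_one_apply (hub z (hball hz))]
    rw [this]
    calc ‖iteratedFDerivWithin ℝ 1 (u ε) Ω z (fun _ => v)‖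
        ≤ ‖iteratedFDerivWithin ℝ 1 (u ε) Ω z‖ * ∏ _i : Fin 1, ‖v‖ :=
          (iteratedFDerivWithin ℝ 1 (u ε) Ω z).le_opNorm _
      _ = ‖iteratedFDerivWithin ℝ 1 (u ε) Ω z‖ * ‖v‖ := by simp
  have hxball : x ε ∈ Metric.ball (x ε) δ := Metric.mem_ball_self hδ
  have hyball : y ε ∈ Metric.ball (x ε) δ := by
    rw [Metric.mem_ball, dist_eq_norm, ← norm_neg]
    simpa [neg_sub] using hxylt
  have hMVT := (convex_ball (x ε) δ).norm_image_sub_le_of_norm_hasFDerivWithin_le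
    hder hbound hxball hyball
  -- hMVT : ‖u ε (y ε) - u ε (x ε)‖ ≤ C₁ * ε ^ (-(N:ℤ)) * ‖y ε - x ε‖
  have key : |u ε (x ε) - u ε (y ε)| ≤ C₁ * ε ^ (-(N:ℤ)) * ‖x ε - y ε‖ := by
    rw [← Real.norm_eq_abs, ← norm_neg]
    simpa [neg_sub, norm_sub_rev] using hMVT
  have hzpow : (ε : ℝ) ^ (-(N:ℤ)) * ε ^ (m + N + 1) = ε ^ (m + 1) := by
    rw [← zpow_natCast ε (m + N + 1), ← zpow_natCast ε (m + 1), ← zpow_add₀ (ne_of_gt hε0)]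
    congr 1
    push_cast
    ring
  have hεNpos : (0:ℝ) < ε ^ (-(N:ℤ)) := zpow_pos hε0 _
  calc |u ε (x ε) - u ε (y ε)| ≤ C₁ * ε ^ (-(N:ℤ)) * ‖x ε - y ε‖ := key
    _ ≤ C₁ * ε ^ (-(N:ℤ)) * (C₂ * ε ^ (m + N + 1)) := by
        apply mul_le_mul_of_nonneg_left hxy
        positivity
    _ = C₁ * C₂ * ε ^ (m + 1) := by linear_combination (C₁ * C₂) * hzpow
    _ ≤ C₁ * C₂ * ε ^ m := by
        apply mul_le_mul_of_nonneg_left _ (by positivity)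
        exact pow_le_pow_of_le_one hε0.le hε1.le (by omega)
end
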